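/- Let R be a commutative ring with unit and G an effective Hausdorff ample groupoid. Then the convolution algebra RG is semiprime if and only if R is reduced (has no non-zero nilpotent elements). -/
import Mathlib


universe u

/-- An étale topological groupoid: arrows form a topological space, units are
identified with idempotent arrows via the domain map `d` and range map `r`;
the domain map is a local homeomorphism. -/
structure EtaleGroupoid : Type (u + 1) where
  Arr : Type u
  top : TopologicalSpace Arr
  d : Arr → Arr
  r : Arr → Arr
  comp : Arr → Arr → Arr
  inv : Arr → Arr
  d_d : ∀ g, d (d g) = d g
  r_d : ∀ g, r (d g) = d g
  d_r : ∀ g, d (r g) = r g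
  r_r : ∀ g, r (r g) = r g
  d_comp : ∀ g h, d g = r h → d (comp g h) = d h
  r_comp : ∀ g h, d g = r h → r (comp g h) = r g
  comp_assoc : ∀ g h k, d g = r h → d h = r k → comp (comp g h) k = comp g (comp h k)
  comp_unit_right : ∀ g, comp g (d g) = g
  comp_unit_left : ∀ g, comp (r g) g = g
  d_inv : ∀ g, d (inv g) = r g
  r_inv : ∀ g, r (inv g) = d g
  inv_inv : ∀ g, inv (inv g) = g
  inv_comp : ∀ g, comp (inv g) g = d g
  comp_inv : ∀ g, comp g (inv g) = r g
  continuous_d : @Continuous Arr Arr top top d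
  continuous_r : @Continuous Arr Arr top top r
  continuous_inv : @Continuous Arr Arr top top inv
  continuous_comp : @Continuous {p : Arr × Arr // d p.1 = r p.2} Arr
    (@instTopologicalSpaceSubtype _ _ (@instTopologicalSpaceProd _ _ top top)) top
    (fun p => comp p.val.1 p.val.2)
  etale : ∀ g : Arr, ∃ U : Set Arr, @IsOpen Arr top U ∧ g ∈ U ∧ Set.InjOn d U ∧
    ∀ V, V ⊆ U → @IsOpen Arr top V → @IsOpen Arr top (d '' V)

instance (G : EtaleGroupoid) : TopologicalSpace G.Arr := G.top

namespace EtaleGroupoid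

variable (G : EtaleGroupoid)

/-- The unit space `G⁽⁰⁾`, identified with the set of unit arrows. -/
def units : Set G.Arr := Set.range G.d

/-- A subset of the unit space is invariant if it is a union of orbits. -/
def Invariant (X : Set G.Arr) : Prop := ∀ g : G.Arr, G.d g ∈ X → G.r g ∈ X

/-- The orbit of a unit `x`. -/
def orbit (x : G.Arr) : Set G.Arr := {y | ∃ g, G.d g = x ∧ G.r g = y}

/-- `U` is an open subset of the unit space (open in the subspace topology). -/
def UnitsOpen (U : Set G.Arr) : Prop :=
  U ⊆ G.units ∧ IsOpen (Subtype.val ⁻¹' U : Set ↥G.units)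

/-- `C` is a closed subset of the unit space (closed in the subspace topology). -/
def UnitsClosed (C : Set G.Arr) : Prop :=
  C ⊆ G.units ∧ IsClosed (Subtype.val ⁻¹' C : Set ↥G.units)

/-- `X` is dense in the unit space. -/
def UnitsDense (X : Set G.Arr) : Prop :=
  Dense (Subtype.val ⁻¹' X : Set ↥G.units)

/-- `X` is nowhere dense in the unit space. -/
def UnitsNowhereDense (X : Set G.Arr) : Prop :=
  interior (closure (Subtype.val ⁻¹' X : Set ↥G.units)) = ∅

/-- Topological transitivity: every non-empty open invariant subset of the
unit space is dense. -/
def TopTransitive : Prop :=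
  ∀ U : Set G.Arr, G.UnitsOpen U → G.Invariant U → U.Nonempty → G.UnitsDense U

end EtaleGroupoid

namespace EtaleGroupoid

variable (G : EtaleGroupoid)

/-- The underlying set of the groupoid convolution algebra `RG`: the `R`-span of
characteristic functions of compact open subsets of the arrow space. -/
def AlgebraSet (R : Type) [CommRing R] : Set (G.Arr → R) :=
  (Submodule.span R {f : G.Arr → R | ∃ U : Set G.Arr,
      IsCompact U ∧ IsOpen U ∧ f = Set.indicator U fun _ => (1 : R)} :
    Submodule R (G.Arr → R))

/-- Convolution: `(f ⋆ g)(x) = ∑_{d h = d x} f (x h⁻¹) g (h)`. -/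
noncomputable def conv {R : Type} [CommRing R] (f g : G.Arr → R) : G.Arr → R := fun x =>
  ∑ᶠ (h : G.Arr) (_ : G.d h = G.d x), f (G.comp x (G.inv h)) * g h

/-- The convolution algebra `RG` is a prime ring (elementwise formulation). -/
def AlgPrime (R : Type) [CommRing R] : Prop :=
  (∃ f ∈ G.AlgebraSet R, f ≠ 0) ∧
  ∀ f ∈ G.AlgebraSet R, ∀ g ∈ G.AlgebraSet R,
    (∀ h ∈ G.AlgebraSet R, G.conv (G.conv f h) g = 0) → f = 0 ∨ g = 0

/-- The convolution algebra `RG` is a semiprime ring (elementwise formulation). -/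
def AlgSemiprime (R : Type) [CommRing R] : Prop :=
  ∀ f ∈ G.AlgebraSet R, (∀ h ∈ G.AlgebraSet R, G.conv (G.conv f h) f = 0) → f = 0

/-- `X ⊆ G⁽⁰⁾` is `R`-dense: every non-zero element of `RG` is non-zero at some
arrow whose domain lies in `X`. -/
def RDense (R : Type) [CommRing R] (X : Set G.Arr) : Prop :=
  ∀ f ∈ G.AlgebraSet R, f ≠ (0 : G.Arr → R) → ∃ g : G.Arr, f g ≠ 0 ∧ G.d g ∈ X

/-- An étale groupoid is ample if its unit space is (locally compact) Hausdorff
with a basis of compact open sets. -/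
def Ample : Prop :=
  T2Space ↥G.units ∧
  ∀ x ∈ G.units, ∀ U : Set G.Arr, G.UnitsOpen U → x ∈ U →
    ∃ K : Set G.Arr, K ⊆ U ∧ x ∈ K ∧ IsCompact K ∧ G.UnitsOpen K

/-- A groupoid is effective if the interior of the isotropy bundle is the unit
space. -/
def Effective : Prop := interior {g : G.Arr | G.d g = G.r g} = G.units

end EtaleGroupoid

/-! ### Auxiliary machinery for the proof of Statement 9 -/

section SecFun
variable {α : Type*}

open Classical in
/-- A choice-based local section of a map `p` restricted to a set `C`. -/
noncomputable def secFun (p : α → α) (C : Set α) : α → α :=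
  fun u => if h : ∃ b ∈ C, p b = u then h.choose else u

lemma secFun_mem {p : α → α} {C : Set α} {u : α} (h : ∃ b ∈ C, p b = u) :
    secFun p C u ∈ C ∧ p (secFun p C u) = u := by
  classical
  simp only [secFun, dif_pos h]
  exact ⟨h.choose_spec.1, h.choose_spec.2⟩

lemma secFun_eq {p : α → α} {C : Set α} (hinj : Set.InjOn p C) {b : α} (hb : b ∈ C) :
    secFun p C (p b) = b := by
  obtain ⟨h1, h2⟩ := secFun_mem (p := p) (C := C) ⟨b, hb, rfl⟩
  exact hinj h1 hb h2

lemma continuousAt_secFun [TopologicalSpace α] {p : α → α} {C : Set α}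
    (hC : IsOpen C) (hinj : Set.InjOn p C) (hop : ∀ O ⊆ C, IsOpen O → IsOpen (p '' O))
    {u : α} (hu : u ∈ p '' C) : ContinuousAt (secFun p C) u := by
  rw [ContinuousAt, Filter.tendsto_def]
  intro s hs
  obtain ⟨c, hcC, hpc⟩ := hu
  obtain ⟨hσC, hσp⟩ := secFun_mem (p := p) (C := C) ⟨c, hcC, hpc⟩
  obtain ⟨O, hOs, hOo, hσO⟩ := mem_nhds_iff.1 hs
  refine Filter.mem_of_superset
    ((hop (C ∩ O) Set.inter_subset_left (hC.inter hOo)).mem_nhds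
      ⟨secFun p C u, ⟨hσC, hσO⟩, hσp⟩) ?_
  rintro u' ⟨c', ⟨hc'C, hc'O⟩, rfl⟩
  have h := secFun_eq hinj hc'C
  simp only [Set.mem_preimage, h]
  exact hOs hc'O

/-- pulling back a compact set along an open local injection -/
lemma compact_pullback [TopologicalSpace α] {p : α → α} {V K : Set α}
    (hV : IsOpen V) (hinj : Set.InjOn p V) (hop : ∀ O ⊆ V, IsOpen O → IsOpen (p '' O))
    (hp : Continuous p) (hK : IsCompact K) (hKV : K ⊆ p '' V) :
    IsCompact (V ∩ p ⁻¹' K) := by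
  set e : ↥V → α := fun v => p v.val with he
  have hecont : Continuous e := hp.comp continuous_subtype_val
  have heinj : Function.Injective e := fun a b h => Subtype.ext (hinj a.2 b.2 h)
  have heopen : IsOpenMap e := by
    intro O hO
    have h1 : IsOpen (Subtype.val '' O : Set α) := hV.isOpenMap_subtype_val _ hO
    have h2 : (Subtype.val '' O : Set α) ⊆ V := by rintro x ⟨y, _, rfl⟩; exact y.2
    have h3 : e '' O = p '' (Subtype.val '' O) := by rw [Set.image_image]
    rw [h3]
    exact hop _ h2 h1
  have hemb : Topology.IsOpenEmbedding e :=
    Topology.IsOpenEmbedding.of_continuous_injective_isOpenMap hecont heinj heopen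
  have hrange : Set.range e = p '' V := by
    rw [he]; ext x; constructor
    · rintro ⟨v, rfl⟩; exact ⟨v.val, v.2, rfl⟩
    · rintro ⟨v, hv, rfl⟩; exact ⟨⟨v, hv⟩, rfl⟩
  have himg : e '' (e ⁻¹' K) = K := by
    rw [Set.image_preimage_eq_inter_range, hrange, Set.inter_eq_self_of_subset_left hKV]
  have hcpre : IsCompact (e ⁻¹' K) := by
    rw [hemb.isEmbedding.isCompact_iff, himg]; exact hK
  have hfin : Subtype.val '' (e ⁻¹' K) = V ∩ p ⁻¹' K := by
    ext x; constructor
    · rintro ⟨v, hv, rfl⟩; exact ⟨v.2, hv⟩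
    · rintro ⟨hxV, hxK⟩; exact ⟨⟨x, hxV⟩, hxK, rfl⟩
  rw [← hfin]
  exact hcpre.image continuous_subtype_val

end SecFun

section Misc

lemma finsum_mem_ideal {α : Type*} {R : Type} [CommRing R] {I : Ideal R} {F : α → R}
    (h : ∀ x, F x ∈ I) : ∑ᶠ x, F x ∈ I := by
  by_cases hf : (Function.support F).Finite
  · rw [finsum_eq_sum F hf]; exact Ideal.sum_mem _ fun i _ => h i
  · rw [finsum_of_infinite_support hf]; exact I.zero_mem

lemma exists_sq_zero {R : Type} [CommRing R] (h : ¬ IsReduced R) :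
    ∃ r : R, r ≠ 0 ∧ r * r = 0 := by
  have hex0 : ∃ x : R, IsNilpotent x ∧ x ≠ 0 := by
    by_contra hc
    push_neg at hc
    exact h ⟨hc⟩
  obtain ⟨x, ⟨n, hn⟩, hx0⟩ := hex0
  classical
  have hex : ∃ m, x ^ m = 0 := ⟨n, hn⟩
  have hn₀ : x ^ Nat.find hex = 0 := Nat.find_spec hex
  match hm : Nat.find hex, hn₀ with
  | 0, hn₀ =>
    exfalso
    rw [pow_zero] at hn₀
    exact hx0 (by calc x = x * 1 := (mul_one x).symm
                  _ = x * 0 := by rw [hn₀]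
                  _ = 0 := mul_zero x)
  | 1, hn₀ => exact absurd (by rwa [pow_one] at hn₀) hx0
  | (m + 2), hn₀ =>
    refine ⟨x ^ (m + 1), ?_, ?_⟩
    · exact Nat.find_min hex (by omega)
    · have harith : (m + 1) + (m + 1) = (m + 2) + m := by omega
      rw [← pow_add, harith, pow_add, hn₀, zero_mul]

end Misc

namespace EtaleGroupoid

variable (G : EtaleGroupoid)

lemma continuous_d' : Continuous G.d := G.continuous_d
lemma continuous_r' : Continuous G.r := G.continuous_r
lemma continuous_inv' : Continuous G.inv := G.continuous_inv

variable {G}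

lemma mem_units_iff {x : G.Arr} : x ∈ G.units ↔ G.d x = x := by
  constructor
  · rintro ⟨y, rfl⟩; exact G.d_d y
  · intro h; exact ⟨x, h⟩

lemma d_mem_units (g : G.Arr) : G.d g ∈ G.units := ⟨g, rfl⟩

lemma r_mem_units (g : G.Arr) : G.r g ∈ G.units := ⟨G.inv g, G.d_inv g⟩

lemma unit_d {x : G.Arr} (hx : x ∈ G.units) : G.d x = x := mem_units_iff.1 hx

lemma unit_r {x : G.Arr} (hx : x ∈ G.units) : G.r x = x := by
  obtain ⟨y, rfl⟩ := hx; exact G.r_d y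

lemma comp_unit_left' {u y : G.Arr} (h : G.r y = u) : G.comp u y = y := by
  rw [← h]; exact G.comp_unit_left y

/-- cancellation: `(x b) b⁻¹ = x` when `d x = r b`. -/
lemma comp_comp_inv {x b : G.Arr} (h : G.d x = G.r b) :
    G.comp (G.comp x b) (G.inv b) = x := by
  rw [G.comp_assoc x b (G.inv b) h (by rw [G.r_inv]), G.comp_inv, ← h, G.comp_unit_right]

/-- cancellation: `(x h⁻¹) h = x` when `d x = d h`. -/
lemma comp_inv_comp {x h : G.Arr} (hd : G.d x = G.d h) :
    G.comp (G.comp x (G.inv h)) h = x := by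
  rw [G.comp_assoc x (G.inv h) h (by rw [G.r_inv, hd]) (by rw [G.d_inv]),
    G.inv_comp, ← hd, G.comp_unit_right]

variable (G)

lemma isOpen_units : IsOpen G.units := by
  rw [isOpen_iff_forall_mem_open]
  intro x hx
  obtain ⟨U, hUo, hxU, _, hUd⟩ := G.etale x
  refine ⟨G.d '' U, ?_, hUd U le_rfl hUo, ⟨x, hxU, unit_d hx⟩⟩
  rintro y ⟨z, _, rfl⟩; exact d_mem_units z

lemma isClosed_units [T2Space G.Arr] : IsClosed G.units := by
  have h : G.units = {x | G.d x = x} := Set.ext fun _ => mem_units_iff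
  rw [h]
  exact isClosed_eq G.continuous_d' continuous_id

lemma unitsOpen_iff {U : Set G.Arr} : G.UnitsOpen U ↔ U ⊆ G.units ∧ IsOpen U := by
  constructor
  · rintro ⟨h1, h2⟩
    refine ⟨h1, ?_⟩
    have h3 := (G.isOpen_units).isOpenMap_subtype_val _ h2
    rwa [Subtype.image_preimage_coe, Set.inter_eq_self_of_subset_right h1] at h3
  · rintro ⟨h1, h2⟩
    exact ⟨h1, h2.preimage continuous_subtype_val⟩

lemma inv_image_eq_preimage (O : Set G.Arr) : G.inv '' O = G.inv ⁻¹' O := by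
  ext c; constructor
  · rintro ⟨o, ho, rfl⟩; simpa [G.inv_inv] using ho
  · intro hc; exact ⟨G.inv c, hc, G.inv_inv c⟩

/-- Every arrow has an open bisection neighbourhood. -/
lemma exists_bisection (g : G.Arr) :
    ∃ V : Set G.Arr, IsOpen V ∧ g ∈ V ∧ Set.InjOn G.d V ∧ Set.InjOn G.r V ∧
      (∀ O ⊆ V, IsOpen O → IsOpen (G.d '' O)) ∧ (∀ O ⊆ V, IsOpen O → IsOpen (G.r '' O)) := by
  obtain ⟨U₁, hU₁o, hgU₁, hinj₁, hd₁⟩ := G.etale g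
  obtain ⟨U₂, hU₂o, hgU₂, hinj₂, hd₂⟩ := G.etale (G.inv g)
  refine ⟨U₁ ∩ G.inv ⁻¹' U₂, hU₁o.inter (hU₂o.preimage G.continuous_inv'),
    ⟨hgU₁, hgU₂⟩, hinj₁.mono Set.inter_subset_left, ?_, ?_, ?_⟩
  · intro x hx y hy hrxy
    have h1 : G.d (G.inv x) = G.d (G.inv y) := by rw [G.d_inv, G.d_inv, hrxy]
    have h2 : G.inv x = G.inv y := hinj₂ hx.2 hy.2 h1
    calc x = G.inv (G.inv x) := (G.inv_inv x).symm
      _ = G.inv (G.inv y) := by rw [h2]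
      _ = y := G.inv_inv y
  · intro O hO hOo
    exact hd₁ O (hO.trans Set.inter_subset_left) hOo
  · intro O hO hOo
    have h1 : G.r '' O = G.d '' (G.inv '' O) := by
      rw [Set.image_image]
      exact Set.image_congr fun o _ => (G.d_inv o).symm
    rw [h1, G.inv_image_eq_preimage]
    refine hd₂ _ ?_ (hOo.preimage G.continuous_inv')
    intro c hc
    have h2 := (hO hc).2
    rwa [Set.mem_preimage, G.inv_inv] at h2

/-- Every arrow has arbitrarily small compact open bisection neighbourhoods. -/
lemma exists_compact_open_nbhd (hample : G.Ample) {O : Set G.Arr} (hO : IsOpen O)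
    {g : G.Arr} (hg : g ∈ O) :
    ∃ B : Set G.Arr, IsCompact B ∧ IsOpen B ∧ g ∈ B ∧ B ⊆ O ∧ Set.InjOn G.d B ∧
      Set.InjOn G.r B ∧ (∀ O' ⊆ B, IsOpen O' → IsOpen (G.d '' O')) ∧
      (∀ O' ⊆ B, IsOpen O' → IsOpen (G.r '' O')) := by
  obtain ⟨V, hVo, hgV, hVdinj, hVrinj, hVdo, hVro⟩ := G.exists_bisection g
  set V₀ := V ∩ O with hV₀def
  have hV₀o : IsOpen V₀ := hVo.inter hO
  have hV₀V : V₀ ⊆ V := Set.inter_subset_left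
  have hgV₀ : g ∈ V₀ := ⟨hgV, hg⟩
  have hdV₀o : IsOpen (G.d '' V₀) := hVdo V₀ hV₀V hV₀o
  have hdV₀u : G.d '' V₀ ⊆ G.units := by rintro y ⟨z, _, rfl⟩; exact d_mem_units z
  obtain ⟨K, hKsub, hdgK, hKc, hKuo⟩ := hample.2 (G.d g) (d_mem_units g) (G.d '' V₀)
    ((G.unitsOpen_iff).2 ⟨hdV₀u, hdV₀o⟩) ⟨g, hgV₀, rfl⟩
  have hKo : IsOpen K := ((G.unitsOpen_iff).1 hKuo).2
  refine ⟨V₀ ∩ G.d ⁻¹' K, ?_, hV₀o.inter (hKo.preimage G.continuous_d'),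
    ⟨hgV₀, hdgK⟩, fun x hx => hx.1.2, hVdinj.mono (fun x hx => hV₀V hx.1),
    hVrinj.mono (fun x hx => hV₀V hx.1), ?_, ?_⟩
  · exact compact_pullback hV₀o (hVdinj.mono hV₀V)
      (fun O' hO' hO'o => hVdo O' (hO'.trans hV₀V) hO'o) G.continuous_d' hKc hKsub
  · intro O' hO' hO'o
    exact hVdo O' (fun x hx => hV₀V (hO' hx).1) hO'o
  · intro O' hO' hO'o
    exact hVro O' (fun x hx => hV₀V (hO' hx).1) hO'o

/-- Effectiveness: shrink an open set of units away from one compact bisection piece. -/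
lemma avoid_piece (heff : G.Effective) [T2Space G.Arr] {C K' W : Set G.Arr}
    (hC : IsOpen C) (hCu : ∀ x ∈ C, x ∉ G.units) (hinj : Set.InjOn G.d C)
    (hdo : ∀ O ⊆ C, IsOpen O → IsOpen (G.d '' O)) (hK'C : K' ⊆ C) (hK' : IsCompact K')
    (hW : IsOpen W) (hWne : W.Nonempty) :
    ∃ V, IsOpen V ∧ V.Nonempty ∧ V ⊆ W ∧ ∀ x ∈ K', ¬(G.d x ∈ V ∧ G.r x ∈ V) := by
  by_cases hsub : W ⊆ G.d '' K'
  · by_cases hex : ∃ x ∈ C, G.d x ∈ W ∧ G.r x ≠ G.d x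
    · obtain ⟨x, hxC, hxW, hxnr⟩ := hex
      obtain ⟨P, Q, hPo, hQo, hdP, hrQ, hPQ⟩ := t2_separation (Ne.symm hxnr)
      set ψ : G.Arr → G.Arr := fun u => G.r (secFun G.d C u) with hψdef
      have hsx : secFun G.d C (G.d x) = x := secFun_eq hinj hxC
      have hψc : ContinuousAt ψ (G.d x) := by
        refine ContinuousAt.comp ?_ (continuousAt_secFun hC hinj hdo ⟨x, hxC, rfl⟩)
        rw [hsx]
        exact G.continuous_r'.continuousAt
      have hQnh : ψ ⁻¹' Q ∈ nhds (G.d x) :=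
        hψc.preimage_mem_nhds (hQo.mem_nhds (by simpa [hψdef, hsx] using hrQ))
      obtain ⟨N, hNsub, hNo, hNx⟩ := mem_nhds_iff.1 hQnh
      refine ⟨W ∩ P ∩ N, (hW.inter hPo).inter hNo, ⟨G.d x, ⟨hxW, hdP⟩, hNx⟩,
        fun y hy => hy.1.1, ?_⟩
      rintro y hyK' ⟨hdy, hry⟩
      have hyC : y ∈ C := hK'C hyK'
      have hψy : ψ (G.d y) = G.r y := by rw [hψdef]; simp only; rw [secFun_eq hinj hyC]
      have hryQ : G.r y ∈ Q := by rw [← hψy]; exact hNsub hdy.2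
      exact Set.disjoint_left.1 hPQ hry.1.2 hryQ
    · exfalso
      push_neg at hex
      obtain ⟨w, hwW⟩ := hWne
      obtain ⟨x, hxK', hdx⟩ := hsub hwW
      have hOo : IsOpen (C ∩ G.d ⁻¹' W) := hC.inter (hW.preimage G.continuous_d')
      have hsubIso : C ∩ G.d ⁻¹' W ⊆ {g | G.d g = G.r g} :=
        fun y hy => (hex y hy.1 hy.2).symm
      have hsubU : C ∩ G.d ⁻¹' W ⊆ G.units := by
        rw [← heff]; exact interior_maximal hsubIso hOo
      have hxO : x ∈ C ∩ G.d ⁻¹' W := ⟨hK'C hxK', by rw [Set.mem_preimage, hdx]; exact hwW⟩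
      exact hCu x (hK'C hxK') (hsubU hxO)
  · rw [Set.not_subset] at hsub
    obtain ⟨w, hwW, hwn⟩ := hsub
    refine ⟨W \ G.d '' K', hW.sdiff ((hK'.image G.continuous_d').isClosed), ⟨w, hwW, hwn⟩,
      Set.diff_subset, ?_⟩
    rintro x hxK' ⟨hdx, _⟩
    exact hdx.2 ⟨x, hxK', rfl⟩

/-- Effectiveness: shrink an open set of units away from a compact set of non-units. -/
lemma avoid_compact (hample : G.Ample) (heff : G.Effective) [T2Space G.Arr]
    {K U : Set G.Arr} (hK : IsCompact K) (hKu : ∀ x ∈ K, x ∉ G.units)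
    (hU : IsOpen U) (hUne : U.Nonempty) (hUu : U ⊆ G.units) :
    ∃ W, IsCompact W ∧ IsOpen W ∧ W.Nonempty ∧ W ⊆ U ∧
      ∀ x ∈ K, ¬(G.d x ∈ W ∧ G.r x ∈ W) := by
  classical
  have hcompl : IsOpen (G.unitsᶜ) := (G.isClosed_units).isOpen_compl
  choose B hBc hBo hBmem hBsub hBdinj hBrinj hBdo hBro using
    fun x : K => G.exists_compact_open_nbhd hample hcompl (hKu x.1 x.2)
  obtain ⟨t, ht⟩ := hK.elim_finite_subcover (fun i : K => B i) (fun i => hBo i)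
    (fun x hx => Set.mem_iUnion.2 ⟨⟨x, hx⟩, hBmem ⟨x, hx⟩⟩)
  have main : ∀ s : Finset K, ∃ V, IsOpen V ∧ V.Nonempty ∧ V ⊆ U ∧
      ∀ i ∈ s, ∀ x ∈ K ∩ B i, ¬(G.d x ∈ V ∧ G.r x ∈ V) := by
    intro s
    induction s using Finset.induction_on with
    | empty => exact ⟨U, hU, hUne, le_rfl, by simp⟩
    | @insert i s _ ih =>
      obtain ⟨V, hVo, hVne, hVU, hVprop⟩ := ih
      obtain ⟨V', hV'o, hV'ne, hV'V, hV'prop⟩ := G.avoid_piece heff (hBo i)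
        (fun x hx => hBsub i hx) (hBdinj i) (hBdo i)
        (Set.inter_subset_right : K ∩ B i ⊆ B i) (hK.inter_right (hBc i).isClosed)
        hVo hVne
      refine ⟨V', hV'o, hV'ne, hV'V.trans hVU, ?_⟩
      rintro j hj x hx ⟨h1, h2⟩
      rcases Finset.mem_insert.1 hj with rfl | hj
      · exact hV'prop x hx ⟨h1, h2⟩
      · exact hVprop j hj x hx ⟨hV'V h1, hV'V h2⟩
  obtain ⟨V, hVo, hVne, hVU, hVprop⟩ := main t
  obtain ⟨w, hw⟩ := hVne
  obtain ⟨W, hWsub, hwW, hWc, hWuo⟩ := hample.2 w (hUu (hVU hw)) V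
    ((G.unitsOpen_iff).2 ⟨hVU.trans hUu, hVo⟩) hw
  refine ⟨W, hWc, ((G.unitsOpen_iff).1 hWuo).2, ⟨w, hwW⟩, hWsub.trans hVU, ?_⟩
  rintro x hx ⟨h1, h2⟩
  obtain ⟨i, hit, hxB⟩ := Set.mem_iUnion₂.1 (ht hx)
  exact hVprop i hit x ⟨hx, hxB⟩ ⟨hWsub h1, hWsub h2⟩

/-- Compactness of the set of products of a compact set with the inverse of a compact set. -/
lemma compact_M [T2Space G.Arr] {S B : Set G.Arr} (hS : IsCompact S) (hB : IsCompact B) :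
    IsCompact ((fun p : {p : G.Arr × G.Arr // G.d p.1 = G.r p.2} => G.comp p.val.1 p.val.2) ''
      {p : {p : G.Arr × G.Arr // G.d p.1 = G.r p.2} | p.val.1 ∈ S ∧ p.val.2 ∈ G.inv '' B}) := by
  have hIB : IsCompact (G.inv '' B) := hB.image G.continuous_inv'
  have hclosed : IsClosed {q : G.Arr × G.Arr | G.d q.1 = G.r q.2} :=
    isClosed_eq (G.continuous_d'.comp continuous_fst) (G.continuous_r'.comp continuous_snd)
  have hprod : IsCompact ((S ×ˢ (G.inv '' B)) ∩ {q : G.Arr × G.Arr | G.d q.1 = G.r q.2}) :=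
    (hS.prod hIB).inter_right hclosed
  have himg : (Subtype.val '' {p : {p : G.Arr × G.Arr // G.d p.1 = G.r p.2} |
      p.val.1 ∈ S ∧ p.val.2 ∈ G.inv '' B}) =
      (S ×ˢ (G.inv '' B)) ∩ {q : G.Arr × G.Arr | G.d q.1 = G.r q.2} := by
    ext q; constructor
    · rintro ⟨p, ⟨h1, h2⟩, rfl⟩; exact ⟨⟨h1, h2⟩, p.2⟩
    · rintro ⟨⟨h1, h2⟩, hq⟩; exact ⟨⟨q, hq⟩, ⟨h1, h2⟩, rfl⟩
  have hT : IsCompact {p : {p : G.Arr × G.Arr // G.d p.1 = G.r p.2} |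
      p.val.1 ∈ S ∧ p.val.2 ∈ G.inv '' B} :=
    Topology.IsEmbedding.subtypeVal.isCompact_iff.2 (himg ▸ hprod)
  exact hT.image G.continuous_comp

section Algebra

variable {R : Type} [CommRing R]

lemma indicator_mem_algebraSet {U : Set G.Arr} (hUc : IsCompact U) (hUo : IsOpen U) :
    (Set.indicator U fun _ => (1 : R)) ∈ G.AlgebraSet R :=
  Submodule.subset_span ⟨U, hUc, hUo, rfl⟩

lemma isLocallyConstant_of_mem [T2Space G.Arr] {f : G.Arr → R} (hf : f ∈ G.AlgebraSet R) :
    IsLocallyConstant f := by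
  refine Submodule.span_induction ?_ ?_ ?_ ?_ hf
  · rintro f ⟨U, hUc, hUo, rfl⟩
    rw [IsLocallyConstant.iff_exists_open]
    intro x
    by_cases hx : x ∈ U
    · exact ⟨U, hUo, hx, fun x' hx' => by
        rw [Set.indicator_of_mem hx', Set.indicator_of_mem hx]⟩
    · exact ⟨Uᶜ, hUc.isClosed.isOpen_compl, hx, fun x' hx' => by
        rw [Set.indicator_of_notMem hx', Set.indicator_of_notMem hx]⟩
  · exact IsLocallyConstant.of_constant _ fun _ _ => rfl
  · intro f g _ _ hfc hgc
    exact hfc.comp₂ hgc (· + ·)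
  · intro a f _ hfc
    exact hfc.comp (a • ·)

lemma support_subset_compact {f : G.Arr → R} (hf : f ∈ G.AlgebraSet R) :
    ∃ S, IsCompact S ∧ Function.support f ⊆ S := by
  refine Submodule.span_induction ?_ ?_ ?_ ?_ hf
  · rintro f ⟨U, hUc, _, rfl⟩
    exact ⟨U, hUc, Set.support_indicator_subset⟩
  · exact ⟨∅, isCompact_empty, by simp⟩
  · rintro f g _ _ ⟨S1, hS1, h1⟩ ⟨S2, hS2, h2⟩
    exact ⟨S1 ∪ S2, hS1.union hS2,
      (Function.support_add f g).trans (Set.union_subset_union h1 h2)⟩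
  · rintro a f _ ⟨S, hS, h⟩
    refine ⟨S, hS, fun x hx => h ?_⟩
    simp only [Function.mem_support] at hx ⊢
    intro hfx
    exact hx (by simp [hfx])

end Algebra

end EtaleGroupoid

/-- For an effective Hausdorff ample groupoid `G` (with non-empty
unit space), `RG` is semiprime iff `R` is reduced. -/
theorem stmt9 (R : Type) [CommRing R] (G : EtaleGroupoid) [T2Space G.Arr]
    (hample : G.Ample) (heff : G.Effective) (hne : G.units.Nonempty) :
    G.AlgSemiprime R ↔ IsReduced R := by
  classical
  constructor
  · -- semiprime → reduced
    intro hsp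
    by_contra hred
    obtain ⟨ρ, hρ0, hρ2⟩ := exists_sq_zero hred
    obtain ⟨x, hx⟩ := hne
    obtain ⟨K1, hK1U, hxK1, hK1c, hK1uo⟩ := hample.2 x hx G.units
      ((G.unitsOpen_iff).2 ⟨le_rfl, G.isOpen_units⟩) hx
    have hK1o : IsOpen K1 := ((G.unitsOpen_iff).1 hK1uo).2
    set χ : G.Arr → R := Set.indicator K1 (fun _ => (1 : R)) with hχ
    set f : G.Arr → R := ρ • χ with hfdef
    have hfA : f ∈ G.AlgebraSet R :=
      Submodule.smul_mem _ ρ (G.indicator_mem_algebraSet hK1c hK1o)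
    have hzero : ∀ h ∈ G.AlgebraSet R, G.conv (G.conv f h) f = 0 := by
      intro h _
      funext x'
      show (∑ᶠ (h'' : G.Arr) (_ : G.d h'' = G.d x'),
        (G.conv f h) (G.comp x' (G.inv h'')) * f h'') = (0 : G.Arr → R) x'
      rw [Pi.zero_apply]
      refine finsum_eq_zero_of_forall_eq_zero fun h'' => ?_
      rw [finsum_eq_if]
      split_ifs with hcond
      · have hmem : (G.conv f h) (G.comp x' (G.inv h'')) ∈ Ideal.span {ρ} := by
          refine finsum_mem_ideal fun h' => ?_
          rw [finsum_eq_if]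
          split_ifs with hcond'
          · refine Ideal.mul_mem_right _ _ (Ideal.mem_span_singleton'.2
              ⟨χ (G.comp (G.comp x' (G.inv h'')) (G.inv h')), ?_⟩)
            rw [hfdef, Pi.smul_apply, smul_eq_mul, mul_comm]
          · exact Ideal.zero_mem _
        obtain ⟨c, hc⟩ := Ideal.mem_span_singleton'.1 hmem
        have hfh : f h'' = ρ * χ h'' := by rw [hfdef, Pi.smul_apply, smul_eq_mul]
        calc (G.conv f h) (G.comp x' (G.inv h'')) * f h''
            = (c * ρ) * (ρ * χ h'') := by rw [hc, hfh]
          _ = c * χ h'' * (ρ * ρ) := by ring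
          _ = 0 := by rw [hρ2, mul_zero]
      · rfl
    have hf0 : f = 0 := hsp f hfA hzero
    have hfx : f x = 0 := by rw [hf0]; rfl
    rw [hfdef, Pi.smul_apply, smul_eq_mul, hχ, Set.indicator_of_mem hxK1, mul_one] at hfx
    exact hρ0 hfx
  · -- reduced → semiprime
    intro hred f hfA hyp
    by_contra hf0
    obtain ⟨S, hSc, hSsupp⟩ := G.support_subset_compact hfA
    have hfl : IsLocallyConstant f := G.isLocallyConstant_of_mem hfA
    have hex : ∃ g₀, f g₀ ≠ 0 := by
      by_contra hc
      push_neg at hc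
      exact hf0 (funext fun y => hc y)
    obtain ⟨g₀, ha⟩ := hex
    set a := f g₀ with hadef
    have hfib : IsOpen {y | f y = a} := hfl.isOpen_fiber a
    obtain ⟨B, hBc, hBo, hgB, hBfib, hBdinj, hBrinj, hBdo, hBro⟩ :=
      G.exists_compact_open_nbhd hample hfib (show g₀ ∈ {y | f y = a} from rfl)
    have hfB : ∀ b ∈ B, f b = a := fun b hb => hBfib hb
    -- the compact open set U = r '' B in the unit space
    have hUo : IsOpen (G.r '' B) := hBro B le_rfl hBo
    have hUu : G.r '' B ⊆ G.units := by rintro y ⟨b, _, rfl⟩; exact EtaleGroupoid.r_mem_units b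
    have hUne : (G.r '' B).Nonempty := ⟨G.r g₀, g₀, hgB, rfl⟩
    -- the compact set M of products (supp f) ⬝ B⁻¹ and its non-unit part K
    set M := ((fun p : {p : G.Arr × G.Arr // G.d p.1 = G.r p.2} => G.comp p.val.1 p.val.2) ''
      {p : {p : G.Arr × G.Arr // G.d p.1 = G.r p.2} | p.val.1 ∈ S ∧ p.val.2 ∈ G.inv '' B})
      with hMdef
    have hMc : IsCompact M := G.compact_M hSc hBc
    have hKc : IsCompact (M \ G.units) := hMc.inter_right (G.isOpen_units).isClosed_compl
    have hKu : ∀ x ∈ M \ G.units, x ∉ G.units := fun x hx => hx.2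
    obtain ⟨W, hWc, hWo, hWne, hWU, hWavoid⟩ :=
      G.avoid_compact hample heff hKc hKu hUo hUne hUu
    obtain ⟨w₀, hw₀⟩ := hWne
    obtain ⟨b₀, hb₀B, hb₀r⟩ := hWU hw₀
    have hw₀u : w₀ ∈ G.units := hUu (hWU hw₀)
    -- the test element χD, D = (B ∩ r⁻¹ W)⁻¹
    set D := G.inv '' (B ∩ G.r ⁻¹' W) with hDdef
    have hBWc : IsCompact (B ∩ G.r ⁻¹' W) :=
      hBc.inter_right ((hWc.isClosed).preimage G.continuous_r')
    have hBWo : IsOpen (B ∩ G.r ⁻¹' W) := hBo.inter (hWo.preimage G.continuous_r')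
    have hDc : IsCompact D := hBWc.image G.continuous_inv'
    have hDo : IsOpen D := by
      rw [hDdef, G.inv_image_eq_preimage]
      exact hBWo.preimage G.continuous_inv'
    set χD : G.Arr → R := Set.indicator D (fun _ => (1 : R)) with hχD
    have hDA : χD ∈ G.AlgebraSet R := G.indicator_mem_algebraSet hDc hDo
    -- key fact about values of conv f χD
    have hG1b : ∀ y, (G.conv f χD) y ≠ 0 →
        ∃ b' ∈ B, G.r b' = G.d y ∧ G.r b' ∈ W ∧ f (G.comp y b') ≠ 0 := by
      intro y hy
      have hexh : ∃ h', (∑ᶠ (_ : G.d h' = G.d y), f (G.comp y (G.inv h')) * χD h') ≠ 0 := by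
        by_contra hc
        push_neg at hc
        exact hy (finsum_eq_zero_of_forall_eq_zero hc)
      obtain ⟨h', hh'⟩ := hexh
      rw [finsum_eq_if] at hh'
      split_ifs at hh' with hcond
      swap
      · exact absurd rfl hh'
      have hχne : χD h' ≠ 0 := right_ne_zero_of_mul hh'
      have hh'D : h' ∈ D := by
        by_contra hcD
        exact hχne (Set.indicator_of_notMem hcD _)
      rw [hDdef] at hh'D
      obtain ⟨b', hb'BW, rfl⟩ := hh'D
      have hfne : f (G.comp y (G.inv (G.inv b'))) ≠ 0 := left_ne_zero_of_mul hh'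
      rw [G.inv_inv] at hfne
      have hrd : G.r b' = G.d y := by rw [← G.d_inv b']; exact hcond
      exact ⟨b', hb'BW.1, hrd, hb'BW.2, hfne⟩
    -- value of conv f χD at the unit w₀
    have hG1w₀ : (G.conv f χD) w₀ = a := by
      have hdw₀ : G.d w₀ = w₀ := EtaleGroupoid.unit_d hw₀u
      have hkey : ∀ h', h' ≠ G.inv b₀ →
          (∑ᶠ (_ : G.d h' = G.d w₀), f (G.comp w₀ (G.inv h')) * χD h') = 0 := by
        intro h' hne
        rw [finsum_eq_if]
        split_ifs with hcond
        · by_contra hval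
          have hχne : χD h' ≠ 0 := right_ne_zero_of_mul hval
          have hh'D : h' ∈ D := by
            by_contra hcD
            exact hχne (Set.indicator_of_notMem hcD _)
          rw [hDdef] at hh'D
          obtain ⟨b', hb'BW, rfl⟩ := hh'D
          have hrr : G.r b' = G.r b₀ := by
            rw [hb₀r, ← hdw₀, ← hcond, G.d_inv]
          exact hne (by rw [hBrinj hb'BW.1 hb₀B hrr])
        · rfl
      show (∑ᶠ (h' : G.Arr) (_ : G.d h' = G.d w₀), f (G.comp w₀ (G.inv h')) * χD h') = a
      rw [finsum_eq_single _ (G.inv b₀) hkey, finsum_eq_if,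
        if_pos (by rw [G.d_inv, hb₀r, hdw₀]), G.inv_inv]
      have h1 : G.comp w₀ b₀ = b₀ := EtaleGroupoid.comp_unit_left' hb₀r
      have hmemD : G.inv b₀ ∈ D := by
        rw [hDdef]
        exact ⟨b₀, ⟨hb₀B, by rw [Set.mem_preimage, hb₀r]; exact hw₀⟩, rfl⟩
      have h2 : χD (G.inv b₀) = 1 := by
        rw [hχD]
        exact Set.indicator_of_mem hmemD _
      rw [h1, h2, hfB b₀ hb₀B, mul_one]
    -- evaluate the hypothesis at b₀
    have hΦ := hyp χD hDA
    have hΦb₀ : (G.conv (G.conv f χD) f) b₀ = a * a := by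
      have hkey : ∀ h'', h'' ≠ b₀ →
          (∑ᶠ (_ : G.d h'' = G.d b₀),
            (G.conv f χD) (G.comp b₀ (G.inv h'')) * f h'') = 0 := by
        intro h'' hne
        rw [finsum_eq_if]
        split_ifs with hd
        swap
        · rfl
        by_contra hval
        have hfne : f h'' ≠ 0 := right_ne_zero_of_mul hval
        have hG1ne : (G.conv f χD) (G.comp b₀ (G.inv h'')) ≠ 0 := left_ne_zero_of_mul hval
        set x := G.comp b₀ (G.inv h'') with hx
        obtain ⟨b', hb'B, hrb', hrbW, hzne⟩ := hG1b x hG1ne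
        have hcomp1 : G.d b₀ = G.r (G.inv h'') := by rw [G.r_inv]; exact hd.symm
        have hdx : G.d x = G.r h'' := by rw [hx, G.d_comp _ _ hcomp1, G.d_inv]
        have hrx : G.r x = w₀ := by rw [hx, G.r_comp _ _ hcomp1, hb₀r]
        have hzS : G.comp x b' ∈ S := hSsupp hzne
        have hdz : G.d (G.comp x b') = G.r (G.inv b') := by
          rw [G.d_comp _ _ hrb'.symm, G.r_inv]
        have hxM : x ∈ M := by
          rw [hMdef]
          refine ⟨⟨(G.comp x b', G.inv b'), hdz⟩, ⟨hzS, ⟨b', hb'B, rfl⟩⟩, ?_⟩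
          show G.comp (G.comp x b') (G.inv b') = x
          exact EtaleGroupoid.comp_comp_inv hrb'.symm
        have hxnu : x ∉ G.units := by
          intro hxu
          have hxr : x = G.r h'' := by rw [← hdx]; exact (EtaleGroupoid.unit_d hxu).symm
          have h1 : G.comp x h'' = h'' := by rw [hxr]; exact G.comp_unit_left h''
          have h2 : G.comp x h'' = b₀ := by
            rw [hx]; exact EtaleGroupoid.comp_inv_comp hd.symm
          exact hne (by rw [← h1, h2])
        refine hWavoid x ⟨hxM, hxnu⟩ ⟨?_, ?_⟩
        · rw [← hrb']; exact hrbW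
        · rw [hrx]; exact hw₀
      show (∑ᶠ (h'' : G.Arr) (_ : G.d h'' = G.d b₀),
        (G.conv f χD) (G.comp b₀ (G.inv h'')) * f h'') = a * a
      rw [finsum_eq_single _ b₀ hkey, finsum_eq_if, if_pos rfl]
      rw [G.comp_inv b₀, hb₀r, hG1w₀, hfB b₀ hb₀B]
    rw [hΦ, Pi.zero_apply] at hΦb₀
    have haa : a * a = 0 := hΦb₀.symm
    have ha0 : a = 0 := (IsNilpotent.eq_zero (⟨2, by rw [pow_two]; exact haa⟩ : IsNilpotent a))
    exact ha ha0
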